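/- arXiv:2110.00537 — 3 statements merged into one kernel-verified Lean document; each statement's English description precedes it below -/
import Mathlib

section
/- Let W₁, W₂, T be symmetric positive definite real n×n matrices. Then the matrix B = (W₂ - iT)^{-1} W₁ (W₁ + iT)^{-1} W₂ (viewed as a complex matrix) satisfies: every eigenvalue λ of B obeys |λ| ≤ sqrt( (1 + ‖Ŵ₂‖^{-2})^{-1} (1 + ‖Ŵ₁‖^{-2})^{-1} ) < 1, where Ŵⱼ = T^{-1/2} Wⱼ T^{-1/2}. -/
open scoped Matrix.Norms.L2Operator

/-- The positive semidefinite square root of a positive semidefinite matrix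
(the definition `Matrix.PosSemidef.sqrt` of the older Mathlib, since removed). -/
noncomputable def Matrix.PosSemidef.sqrt {n 𝕜 : Type*} [Fintype n] [RCLike 𝕜] [PartialOrder 𝕜]
    [DecidableEq n] {A : Matrix n n 𝕜} (hA : A.PosSemidef) : Matrix n n 𝕜 :=
  hA.1.eigenvectorUnitary.1 * Matrix.diagonal ((↑) ∘ (√·) ∘ hA.1.eigenvalues) *
  (star hA.1.eigenvectorUnitary : Matrix n n 𝕜)

/-- complexification of a real matrix -/
def Matrix.cplx {n : ℕ} (A : Matrix (Fin n) (Fin n) ℝ) : Matrix (Fin n) (Fin n) ℂ :=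
  A.map Complex.ofReal

/-- `Ŵ = T^{-1/2} W T^{-1/2}` -/
noncomputable def Matrix.hatW {n : ℕ} (T : Matrix (Fin n) (Fin n) ℝ) (hT : T.PosDef)
    (W : Matrix (Fin n) (Fin n) ℝ) : Matrix (Fin n) (Fin n) ℝ :=
  (hT.posSemidef.sqrt)⁻¹ * W * (hT.posSemidef.sqrt)⁻¹

/-!
With `S = T^{1/2}` we have `Wⱼ ± iT = S (Ŵⱼ ± i) S`, so `B` is similar to
`(Ŵ₁ (Ŵ₁ + i)⁻¹) (Ŵ₂ (Ŵ₂ - i)⁻¹)`. For a symmetric `Ŵ`, the cross term in `‖(Ŵ ± i) y‖²` vanishes,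
so `‖(Ŵ ± i) y‖² = ‖Ŵ y‖² + ‖y‖² ≥ (1 + ‖Ŵ‖⁻²) ‖Ŵ y‖²`; this bounds the norm of each factor by
`(1 + ‖Ŵⱼ‖⁻²)^{-1/2}`, and every eigenvalue is bounded by the norm of the product.
-/

namespace LinearMap.IsSymmetric
variable {𝕜 E : Type*} [RCLike 𝕜] [NormedAddCommGroup E] [InnerProductSpace 𝕜 E]
  {T : E →ₗ[𝕜] E}

open RCLike in
theorem norm_apply_add_smul_sq (hT : T.IsSymmetric) {ε : 𝕜} (hε : re ε = 0) (x : E) :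
    ‖T x + ε • x‖ ^ 2 = ‖T x‖ ^ 2 + ‖ε‖ ^ 2 * ‖x‖ ^ 2 := by
  have hcross : re (inner 𝕜 (T x) (ε • x)) = 0 := by
    rw [inner_smul_right, ← hT.coe_re_inner_apply_self, re_mul_ofReal, hε, zero_mul]
  rw [norm_add_sq (𝕜 := 𝕜), hcross, norm_smul, mul_pow]
  ring

theorem norm_apply_le_mul_norm_apply_add_smul {a : ℝ} (hT : T.IsSymmetric) (ha : 0 < a)
    (hTa : ∀ x, ‖T x‖ ≤ a * ‖x‖) {ε : 𝕜} (hre : RCLike.re ε = 0) (hε : ‖ε‖ = 1) (x : E) :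
    ‖T x‖ ≤ √((1 + (a ^ 2)⁻¹)⁻¹) * ‖T x + ε • x‖ := by
  have hx : ‖T x‖ ^ 2 * (a ^ 2)⁻¹ ≤ ‖x‖ ^ 2 := by
    rw [mul_inv_le_iff₀ (by positivity), ← mul_pow, mul_comm]
    exact pow_le_pow_left₀ (norm_nonneg _) (hTa x) 2
  have hsq : ‖T x‖ ^ 2 ≤ (1 + (a ^ 2)⁻¹)⁻¹ * ‖T x + ε • x‖ ^ 2 := by
    rw [hT.norm_apply_add_smul_sq hre, hε, one_pow, one_mul, inv_mul_eq_div,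
      le_div_iff₀ (by positivity)]
    linarith
  calc ‖T x‖ = √(‖T x‖ ^ 2) := (Real.sqrt_sq (norm_nonneg _)).symm
    _ ≤ √((1 + (a ^ 2)⁻¹)⁻¹ * ‖T x + ε • x‖ ^ 2) := Real.sqrt_le_sqrt hsq
    _ = _ := by rw [Real.sqrt_mul (by positivity), Real.sqrt_sq (norm_nonneg _)]

end LinearMap.IsSymmetric

namespace Matrix
variable {ι : Type*} [Fintype ι] [DecidableEq ι] {A : Matrix ι ι ℂ}

theorem IsHermitian.isUnit_add_smul_one (hA : A.IsHermitian) {ε : ℂ} (hε : ε.im ≠ 0) :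
    IsUnit (A + ε • 1) := by
  by_contra h
  have hspec : -ε ∈ spectrum ℂ A := by
    rw [spectrum.mem_iff, Algebra.algebraMap_eq_smul_one, ← IsUnit.neg_iff]
    simpa [add_comm, neg_smul] using h
  have := congrArg Complex.im (hA.isSelfAdjoint.mem_spectrum_eq_re hspec)
  simp_all

theorem IsHermitian.norm_mul_inv_add_smul_one_le (hA : A.IsHermitian) {a : ℝ} (ha : 0 < a)
    (hAa : ‖A‖ ≤ a) {ε : ℂ} (hre : ε.re = 0) (hε : ‖ε‖ = 1) :
    ‖A * (A + ε • 1)⁻¹‖ ≤ √((1 + (a ^ 2)⁻¹)⁻¹) := by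
  have hunit : IsUnit (A + ε • 1) := hA.isUnit_add_smul_one (by
    intro him; simp [Complex.norm_eq_sqrt_sq_add_sq, hre, him] at hε)
  have hsymm : (toEuclideanLin A).IsSymmetric := isSymmetric_toEuclideanLin_iff.mpr hA
  rw [cstar_norm_def]
  refine ContinuousLinearMap.opNorm_le_bound _ (Real.sqrt_nonneg _) fun x => ?_
  set y := toEuclideanCLM (𝕜 := ℂ) (A + ε • 1)⁻¹ x
  have hx : x = toEuclideanLin A y + ε • y := by
    have hinv : (A + ε • 1) * (A + ε • 1)⁻¹ = 1 :=
      mul_nonsing_inv _ ((isUnit_iff_isUnit_det _).mp hunit)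
    apply WithLp.ofLp_injective 2
    conv_lhs => rw [← one_mulVec x.ofLp, ← hinv, ← mulVec_mulVec]
    simp [y, add_mul, add_mulVec, smul_mulVec]
  have h2 : toEuclideanCLM (𝕜 := ℂ) (A * (A + ε • 1)⁻¹) x = toEuclideanLin A y := by
    apply WithLp.ofLp_injective 2
    simp [y, ofLp_toEuclideanCLM, mulVec_mulVec]
  rw [h2, hx]
  exact hsymm.norm_apply_le_mul_norm_apply_add_smul ha
    (fun z => (toEuclideanCLM (𝕜 := ℂ) A).le_of_opNorm_le hAa z) hre hε y

end Matrix

namespace Matrix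
variable {ι K : Type*} [Fintype ι] [DecidableEq ι] [CommRing K]

theorem spectrum_inv_mul_mul {U : Matrix ι ι K} (hU : IsUnit U) (M : Matrix ι ι K) :
    spectrum K (U⁻¹ * M * U) = spectrum K M := by
  lift U to (Matrix ι ι K)ˣ using hU
  rw [← coe_units_inv]
  exact spectrum.units_conjugate'

theorem spectrum_inv_congr_mul_congr_mul_inv_congr_mul_congr {S X₁ X₂ H₁ H₂ : Matrix ι ι K}
    (hS : IsUnit S) (hX₂ : IsUnit X₂) :
    spectrum K ((S * X₂ * S)⁻¹ * (S * H₁ * S) * (S * X₁ * S)⁻¹ * (S * H₂ * S)) =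
      spectrum K (H₁ * X₁⁻¹ * (H₂ * X₂⁻¹)) := by
  have hS' := (isUnit_iff_isUnit_det _).mp hS
  have hX₂' := (isUnit_iff_isUnit_det _).mp hX₂
  have : (S * X₂ * S)⁻¹ * (S * H₁ * S) * (S * X₁ * S)⁻¹ * (S * H₂ * S) =
      (X₂ * S)⁻¹ * (H₁ * X₁⁻¹ * (H₂ * X₂⁻¹)) * (X₂ * S) := by
    simp only [mul_inv_rev, Matrix.mul_assoc, nonsing_inv_mul_cancel_left _ _ hS',
      mul_nonsing_inv_cancel_left _ _ hS', nonsing_inv_mul_cancel_left _ _ hX₂']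
  rw [this, spectrum_inv_mul_mul (hX₂.mul hS)]

end Matrix

theorem EuclideanSpace.norm_sq_eq_norm_re_sq_add_norm_im_sq {ι : Type*} [Fintype ι]
    (x : EuclideanSpace ℂ ι) :
    ‖x‖ ^ 2 = ‖WithLp.toLp 2 fun i => (x i).re‖ ^ 2 + ‖WithLp.toLp 2 fun i => (x i).im‖ ^ 2 := by
  simp only [EuclideanSpace.norm_sq_eq, ← Finset.sum_add_distrib]
  refine Finset.sum_congr rfl fun i _ => ?_
  rw [Complex.sq_norm, Complex.normSq_apply, Real.norm_eq_abs, Real.norm_eq_abs, sq_abs, sq_abs]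
  ring

section sqrt
open scoped MatrixOrder ComplexOrder

theorem Matrix.PosSemidef.sqrt_eq_cfcSqrt {ι 𝕜 : Type*} [Fintype ι] [RCLike 𝕜] [DecidableEq ι]
    {A : Matrix ι ι 𝕜} (hA : A.PosSemidef) : hA.sqrt = CFC.sqrt A := by
  rw [CFC.sqrt_eq_cfc, cfc_nnreal_eq_real _ A hA.nonneg, hA.1.cfc_eq, Matrix.IsHermitian.cfc,
    Unitary.conjStarAlgAut_apply, Matrix.PosSemidef.sqrt]
  congr 3 with i
  simp [hA.eigenvalues_nonneg i]

namespace Matrix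

variable {ι 𝕜 : Type*} [Fintype ι] [RCLike 𝕜] [DecidableEq ι] {A : Matrix ι ι 𝕜}

theorem PosSemidef.sqrt_mul_sqrt (hA : A.PosSemidef) : hA.sqrt * hA.sqrt = A := by
  rw [hA.sqrt_eq_cfcSqrt, CFC.sqrt_mul_sqrt_self A hA.nonneg]

theorem PosSemidef.isHermitian_sqrt (hA : A.PosSemidef) : hA.sqrt.IsHermitian := by
  rw [hA.sqrt_eq_cfcSqrt]
  exact (nonneg_iff_posSemidef.mp (CFC.sqrt_nonneg A)).isHermitian

theorem PosDef.isUnit_sqrt (hA : A.PosDef) : IsUnit hA.posSemidef.sqrt := by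
  rw [hA.posSemidef.sqrt_eq_cfcSqrt, CFC.isUnit_sqrt_iff A hA.posSemidef.nonneg]
  exact hA.isUnit

end Matrix

end sqrt

namespace Matrix

section cplx
variable {n : ℕ}

theorem cplx_mul (A B : Matrix (Fin n) (Fin n) ℝ) : (A * B).cplx = A.cplx * B.cplx :=
  Matrix.map_mul (f := Complex.ofRealHom)

theorem IsHermitian.cplx {A : Matrix (Fin n) (Fin n) ℝ} (hA : A.IsHermitian) :
    A.cplx.IsHermitian :=
  hA.map _ fun x => (Complex.conj_ofReal x).symm

theorem IsUnit.cplx {A : Matrix (Fin n) (Fin n) ℝ} (hA : IsUnit A) : IsUnit A.cplx :=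
  hA.map Complex.ofRealHom.mapMatrix

theorem re_cplx_mulVec (A : Matrix (Fin n) (Fin n) ℝ) (x : Fin n → ℂ) (i : Fin n) :
    ((A.cplx *ᵥ x) i).re = (A *ᵥ fun j => (x j).re) i := by
  simp [mulVec, dotProduct, cplx, Complex.re_sum]

theorem im_cplx_mulVec (A : Matrix (Fin n) (Fin n) ℝ) (x : Fin n → ℂ) (i : Fin n) :
    ((A.cplx *ᵥ x) i).im = (A *ᵥ fun j => (x j).im) i := by
  simp [mulVec, dotProduct, cplx, Complex.im_sum]

theorem norm_cplx_le (A : Matrix (Fin n) (Fin n) ℝ) : ‖A.cplx‖ ≤ ‖A‖ := by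
  rw [cstar_norm_def, cstar_norm_def]
  refine ContinuousLinearMap.opNorm_le_bound _ (norm_nonneg _) fun x => ?_
  set u : EuclideanSpace ℝ (Fin n) := WithLp.toLp 2 fun i => (x i).re
  set v : EuclideanSpace ℝ (Fin n) := WithLp.toLp 2 fun i => (x i).im
  have hre : (WithLp.toLp 2 fun i => (toEuclideanCLM (𝕜 := ℂ) A.cplx x i).re) =
      toEuclideanCLM (𝕜 := ℝ) A u := by
    ext i; exact re_cplx_mulVec A x.ofLp i
  have him : (WithLp.toLp 2 fun i => (toEuclideanCLM (𝕜 := ℂ) A.cplx x i).im) =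
      toEuclideanCLM (𝕜 := ℝ) A v := by
    ext i; exact im_cplx_mulVec A x.ofLp i
  refine (sq_le_sq₀ (norm_nonneg _) (by positivity)).mp ?_
  calc ‖toEuclideanCLM (𝕜 := ℂ) A.cplx x‖ ^ 2
      = ‖toEuclideanCLM (𝕜 := ℝ) A u‖ ^ 2 + ‖toEuclideanCLM (𝕜 := ℝ) A v‖ ^ 2 := by
        rw [EuclideanSpace.norm_sq_eq_norm_re_sq_add_norm_im_sq, hre, him]
    _ ≤ (‖toEuclideanCLM (𝕜 := ℝ) A‖ * ‖u‖) ^ 2 + (‖toEuclideanCLM (𝕜 := ℝ) A‖ * ‖v‖) ^ 2 := by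
        gcongr <;> exact ContinuousLinearMap.le_opNorm _ _
    _ = (‖toEuclideanCLM (𝕜 := ℝ) A‖ * ‖x‖) ^ 2 := by
        rw [mul_pow, mul_pow, mul_pow, EuclideanSpace.norm_sq_eq_norm_re_sq_add_norm_im_sq x]; ring

end cplx

section hatW
variable {n : ℕ} {T : Matrix (Fin n) (Fin n) ℝ} (hT : T.PosDef)

theorem posDef_hatW {W : Matrix (Fin n) (Fin n) ℝ} (hW : W.PosDef) : (T.hatW hT W).PosDef := by
  have hU : IsUnit hT.posSemidef.sqrt⁻¹ := (isUnit_nonsing_inv_iff).mpr hT.isUnit_sqrt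
  have hstar : star hT.posSemidef.sqrt⁻¹ = hT.posSemidef.sqrt⁻¹ :=
    hT.posSemidef.isHermitian_sqrt.inv
  simpa only [hatW, hstar] using (Matrix.IsUnit.posDef_star_left_conjugate_iff hU).mpr hW

theorem hatW_ne_zero [Nonempty (Fin n)] {W : Matrix (Fin n) (Fin n) ℝ} (hW : W.PosDef) :
    T.hatW hT W ≠ 0 :=
  (posDef_hatW hT hW).isUnit.ne_zero

theorem sqrt_mul_hatW_mul_sqrt (W : Matrix (Fin n) (Fin n) ℝ) :
    hT.posSemidef.sqrt * T.hatW hT W * hT.posSemidef.sqrt = W := by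
  have hdet := (isUnit_iff_isUnit_det _).mp hT.isUnit_sqrt
  simp only [hatW, ← Matrix.mul_assoc, mul_nonsing_inv _ hdet, Matrix.one_mul,
    nonsing_inv_mul_cancel_right _ _ hdet]

theorem cplx_add_smul_cplx_eq (W : Matrix (Fin n) (Fin n) ℝ) (c : ℂ) :
    W.cplx + c • T.cplx = hT.posSemidef.sqrt.cplx * ((T.hatW hT W).cplx + c • 1) *
      hT.posSemidef.sqrt.cplx := by
  rw [Matrix.mul_add, Matrix.add_mul, ← cplx_mul, ← cplx_mul, sqrt_mul_hatW_mul_sqrt,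
    mul_smul_comm, smul_mul_assoc, Matrix.mul_one, ← cplx_mul, hT.posSemidef.sqrt_mul_sqrt]

theorem norm_cplx_hatW_mul_inv_le [Nonempty (Fin n)] {W : Matrix (Fin n) (Fin n) ℝ}
    (hW : W.PosDef) {ε : ℂ} (hre : ε.re = 0) (hε : ‖ε‖ = 1) :
    ‖(T.hatW hT W).cplx * ((T.hatW hT W).cplx + ε • 1)⁻¹‖ ≤
      √((1 + (‖T.hatW hT W‖ ^ 2)⁻¹)⁻¹) :=
  (posDef_hatW hT hW).isHermitian.cplx.norm_mul_inv_add_smul_one_le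
    (norm_pos_iff.mpr (hatW_ne_zero hT hW)) (norm_cplx_le _) hre hε

end hatW

end Matrix

open Matrix in
/-- eigenvalue bound for the Method I iteration matrix
`B = (W₂ - iT)⁻¹ W₁ (W₁ + iT)⁻¹ W₂`. -/
theorem stmt_1 {n : ℕ} (hn : 0 < n) (W₁ W₂ T : Matrix (Fin n) (Fin n) ℝ)
    (hW₁ : W₁.PosDef) (hW₂ : W₂.PosDef) (hT : T.PosDef) :
    (∀ lam ∈ spectrum ℂ
        ((W₂.cplx - Complex.I • T.cplx)⁻¹ * W₁.cplx *
          (W₁.cplx + Complex.I • T.cplx)⁻¹ * W₂.cplx),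
      ‖lam‖ ≤ Real.sqrt ((1 + (‖T.hatW hT W₂‖ ^ 2)⁻¹)⁻¹ *
        (1 + (‖T.hatW hT W₁‖ ^ 2)⁻¹)⁻¹)) ∧
    Real.sqrt ((1 + (‖T.hatW hT W₂‖ ^ 2)⁻¹)⁻¹ * (1 + (‖T.hatW hT W₁‖ ^ 2)⁻¹)⁻¹) < 1 := by
  have : Nonempty (Fin n) := ⟨⟨0, hn⟩⟩
  set S := hT.posSemidef.sqrt.cplx
  set H₁ := (T.hatW hT W₁).cplx
  set H₂ := (T.hatW hT W₂).cplx
  have hW : ∀ W : Matrix (Fin n) (Fin n) ℝ, W.cplx = S * (T.hatW hT W).cplx * S := fun W => by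
    simpa using cplx_add_smul_cplx_eq hT W 0
  have hspec : spectrum ℂ ((W₂.cplx - Complex.I • T.cplx)⁻¹ * W₁.cplx *
      (W₁.cplx + Complex.I • T.cplx)⁻¹ * W₂.cplx) =
      spectrum ℂ (H₁ * (H₁ + Complex.I • 1)⁻¹ * (H₂ * (H₂ + (-Complex.I) • 1)⁻¹)) := by
    rw [sub_eq_add_neg, ← neg_smul, cplx_add_smul_cplx_eq hT, cplx_add_smul_cplx_eq hT,
      hW W₁, hW W₂]
    exact spectrum_inv_congr_mul_congr_mul_inv_congr_mul_congr hT.isUnit_sqrt.cplx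
      ((posDef_hatW hT hW₂).isHermitian.cplx.isUnit_add_smul_one (by simp))
  have hc : ∀ W : Matrix (Fin n) (Fin n) ℝ, W.PosDef → (1 + (‖T.hatW hT W‖ ^ 2)⁻¹)⁻¹ < 1 :=
    fun W hW => inv_lt_one_of_one_lt₀ <| lt_add_of_pos_right _ <| by
      have := norm_pos_iff.mpr (hatW_ne_zero hT hW); positivity
  refine ⟨fun lam hlam => ?_, ?_⟩
  · rw [hspec] at hlam
    calc ‖lam‖ ≤ ‖H₁ * (H₁ + Complex.I • 1)⁻¹ * (H₂ * (H₂ + (-Complex.I) • 1)⁻¹)‖ :=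
          spectrum.norm_le_norm_of_mem hlam
      _ ≤ ‖H₁ * (H₁ + Complex.I • 1)⁻¹‖ * ‖H₂ * (H₂ + (-Complex.I) • 1)⁻¹‖ := norm_mul_le _ _
      _ ≤ √((1 + (‖T.hatW hT W₁‖ ^ 2)⁻¹)⁻¹) * √((1 + (‖T.hatW hT W₂‖ ^ 2)⁻¹)⁻¹) :=
          mul_le_mul (norm_cplx_hatW_mul_inv_le hT hW₁ (by simp) (by simp))
            (norm_cplx_hatW_mul_inv_le hT hW₂ (by simp) (by simp)) (norm_nonneg _)
            (Real.sqrt_nonneg _)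
      _ = _ := by rw [← Real.sqrt_mul (by positivity), mul_comm]
  · rw [Real.sqrt_lt' one_pos, one_pow]
    exact mul_lt_one_of_nonneg_of_lt_one_left (by positivity) (hc W₂ hW₂) (hc W₁ hW₁).le
end

section
/- Let Ŵ be a Hermitian positive definite complex n×n matrix and α ≥ 1. Then the matrix C = ((α-1)I - iŴ)(αI + iŴ)^{-1} is normal and has spectral norm ‖C‖ = max over eigenvalues μ of Ŵ of sqrt( ((α-1)² + μ²)/(α² + μ²) ) ≤ sqrt( ((α-1)² + ‖Ŵ‖²)/(α² + ‖Ŵ‖²) ). -/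
/-!
By the spectral theorem `Ŵ = U D U*` with `U` unitary and `D = diag(μᵢ)`. Conjugation by `U` is a
⋆-algebra automorphism; it commutes with the matrix inverse and preserves the spectral norm. Hence
`C = U diag(g(μᵢ)) U*` with `g(μ) = ((α-1) - iμ)/(α + iμ)`, so `C` is normal and
`‖C‖ = maxᵢ |g(μᵢ)|`. The bound follows from `|μᵢ| ≤ ‖Ŵ‖`, since `t ↦ ((α-1)² + t)/(α² + t)`
is increasing on `t ≥ 0` when `(α-1)² ≤ α²`.
-/

open scoped Matrix.Norms.L2Operator ComplexOrder

theorem map_ringInverse {M N F : Type*} [MonoidWithZero M] [MonoidWithZero N] [EquivLike F M N]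
    [MulEquivClass F M N] (f : F) (a : M) : f (Ring.inverse a) = Ring.inverse (f a) := by
  by_cases ha : IsUnit a
  · obtain ⟨u, rfl⟩ := ha
    rw [Ring.inverse_unit]
    exact (Ring.inverse_unit (Units.map (f : M →* N) u)).symm
  · rw [Ring.inverse_non_unit _ ha, Ring.inverse_non_unit _ (by rwa [isUnit_map_iff]), map_zero]

namespace Matrix

variable {n : Type*} [Fintype n] [DecidableEq n]

theorem map_nonsing_inv {α F : Type*} [CommRing α] [EquivLike F (Matrix n n α) (Matrix n n α)]
    [MulEquivClass F (Matrix n n α) (Matrix n n α)] (f : F) (A : Matrix n n α) :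
    f A⁻¹ = (f A)⁻¹ := by
  simp only [nonsing_inv_eq_ringInverse, map_ringInverse]

theorem inv_diagonal_of_ne_zero {K : Type*} [Field K] {v : n → K} (hv : ∀ i, v i ≠ 0) :
    (diagonal v)⁻¹ = diagonal v⁻¹ :=
  inv_eq_right_inv <| by rw [diagonal_mul_diagonal, ← diagonal_one]; congr; ext i; simp [hv]

instance isStarNormal_diagonal {α : Type*} [CommSemiring α] [StarRing α] (v : n → α) :
    IsStarNormal (diagonal v) :=
  ⟨by simp [Commute, SemiconjBy, star_eq_conjTranspose, diagonal_mul_diagonal, mul_comm]⟩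

theorem l2_opNorm_diagonal_eq_iSup {𝕜 : Type*} [RCLike 𝕜] (v : n → 𝕜) :
    ‖diagonal v‖ = ⨆ i, ‖v i‖ := by
  rw [l2_opNorm_diagonal]
  refine le_antisymm ((pi_norm_le_iff_of_nonneg (Real.iSup_nonneg fun _ ↦ norm_nonneg _)).2
    fun i ↦ le_ciSup (f := fun i ↦ ‖v i‖) (Set.finite_range _).bddAbove i)
    (Real.iSup_le (norm_le_pi_norm v) (norm_nonneg _))

end Matrix

theorem CStarRing.norm_conjStarAlgAut {S E : Type*} [NormedRing E] [StarRing E] [CStarRing E]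
    [SMul S E] [IsScalarTower S E E] [SMulCommClass S E E]
    (u : unitary E) (x : E) : ‖Unitary.conjStarAlgAut S E u x‖ = ‖x‖ := by
  rw [Unitary.conjStarAlgAut_apply, norm_mul_mem_unitary _ (Unitary.star_mem u.2),
    norm_coe_unitary_mul]

theorem add_div_add_le_add_div_add {p q s t : ℝ} (hq : 0 < q) (hpq : p ≤ q) (hs : 0 ≤ s)
    (hst : s ≤ t) : (p + s) / (q + s) ≤ (p + t) / (q + t) := by
  rw [div_le_div_iff₀ (by linarith) (by linarith)]
  nlinarith [mul_nonneg (sub_nonneg.2 hst) (sub_nonneg.2 hpq)]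

theorem Complex.norm_sub_mul_I_div_add_mul_I (p q t : ℝ) :
    ‖(p - t * I) / (q + t * I)‖ = √((p ^ 2 + t ^ 2) / (q ^ 2 + t ^ 2)) := by
  rw [norm_div, sub_eq_add_neg, ← neg_mul, ← ofReal_neg, norm_add_mul_I, norm_add_mul_I,
    neg_sq, Real.sqrt_div' _ (by positivity)]

namespace Matrix.IsHermitian

open Unitary

variable {n 𝕜 : Type*} [Fintype n] [DecidableEq n] [RCLike 𝕜] {A : Matrix n n 𝕜}
  (hA : A.IsHermitian)

theorem smul_one_add_smul_eq_conjStarAlgAut (a b : 𝕜) :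
    a • (1 : Matrix n n 𝕜) + b • A =
      conjStarAlgAut 𝕜 _ hA.eigenvectorUnitary (diagonal fun i ↦ a + b * hA.eigenvalues i) := by
  conv_lhs => rw [hA.spectral_theorem]
  rw [← map_one (conjStarAlgAut 𝕜 _ hA.eigenvectorUnitary), ← map_smul, ← map_smul, ← map_add]
  congr 1
  ext i j
  by_cases h : i = j <;> simp [h]

theorem smul_one_add_smul_mul_inv_eq_conjStarAlgAut {a b c d : 𝕜}
    (hcd : ∀ i, c + d * hA.eigenvalues i ≠ 0) :
    (a • (1 : Matrix n n 𝕜) + b • A) * (c • 1 + d • A)⁻¹ =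
      conjStarAlgAut 𝕜 _ hA.eigenvectorUnitary
        (diagonal fun i ↦ (a + b * hA.eigenvalues i) / (c + d * hA.eigenvalues i)) := by
  rw [hA.smul_one_add_smul_eq_conjStarAlgAut, hA.smul_one_add_smul_eq_conjStarAlgAut,
    ← map_nonsing_inv, ← map_mul, inv_diagonal_of_ne_zero hcd, diagonal_mul_diagonal]
  simp only [Pi.inv_apply, div_eq_mul_inv]

theorem l2_opNorm_eq_iSup_abs_eigenvalues : ‖A‖ = ⨆ i, |hA.eigenvalues i| := by
  conv_lhs => rw [hA.spectral_theorem]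
  rw [CStarRing.norm_conjStarAlgAut, l2_opNorm_diagonal_eq_iSup]
  simp

theorem abs_eigenvalues_le_l2_opNorm (i : n) : |hA.eigenvalues i| ≤ ‖A‖ :=
  hA.l2_opNorm_eq_iSup_abs_eigenvalues ▸
    le_ciSup (f := fun i ↦ |hA.eigenvalues i|) (Set.finite_range _).bddAbove i

end Matrix.IsHermitian

open Matrix Complex Unitary

/-- for `Ŵ` Hermitian positive definite and `α ≥ 1`, the matrix
`C = ((α-1)I - iŴ)(αI + iŴ)⁻¹` is normal, its spectral norm is the maximum of
`√(((α-1)² + μ²)/(α² + μ²))` over the eigenvalues `μ` of `Ŵ`, and this is bounded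
by `√(((α-1)² + ‖Ŵ‖²)/(α² + ‖Ŵ‖²))`. -/
theorem stmt_10 {n : ℕ} (What : Matrix (Fin n) (Fin n) ℂ) (hW : What.PosDef)
    (α : ℝ) (hα : 1 ≤ α)
    (C : Matrix (Fin n) (Fin n) ℂ)
    (hC : C = (((α : ℂ) - 1) • (1 : Matrix (Fin n) (Fin n) ℂ) - Complex.I • What) *
      ((α : ℂ) • (1 : Matrix (Fin n) (Fin n) ℂ) + Complex.I • What)⁻¹) :
    IsStarNormal C ∧
    ‖C‖ = ⨆ i : Fin n, Real.sqrt
      (((α - 1) ^ 2 + hW.1.eigenvalues i ^ 2) / (α ^ 2 + hW.1.eigenvalues i ^ 2)) ∧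
    ‖C‖ ≤ Real.sqrt (((α - 1) ^ 2 + ‖What‖ ^ 2) / (α ^ 2 + ‖What‖ ^ 2)) := by
  have hden (i : Fin n) : (α : ℂ) + I * hW.1.eigenvalues i ≠ 0 := fun h ↦
    (by positivity : (0 : ℝ) < α).ne' (by simpa using congrArg re h)
  have hC_diag : C = conjStarAlgAut ℂ _ hW.1.eigenvectorUnitary
      (diagonal fun i ↦
        ((α - 1 : ℝ) - hW.1.eigenvalues i * I) / (α + hW.1.eigenvalues i * I)) := by
    rw [hC, sub_eq_add_neg, ← neg_smul, hW.1.smul_one_add_smul_mul_inv_eq_conjStarAlgAut hden]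
    congr! 3 with i
    simp only [RCLike.ofReal_eq_complex_ofReal]
    push_cast
    ring
  have hC_norm : ‖C‖ = ⨆ i,
      √(((α - 1) ^ 2 + hW.1.eigenvalues i ^ 2) / (α ^ 2 + hW.1.eigenvalues i ^ 2)) := by
    simp only [hC_diag, CStarRing.norm_conjStarAlgAut, l2_opNorm_diagonal_eq_iSup,
      norm_sub_mul_I_div_add_mul_I]
  refine ⟨hC_diag ▸ inferInstance, hC_norm,
    hC_norm ▸ Real.iSup_le (fun i ↦ ?_) (Real.sqrt_nonneg _)⟩
  refine Real.sqrt_le_sqrt (add_div_add_le_add_div_add (by positivity) (by nlinarith)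
    (sq_nonneg _) (sq_le_sq.2 ?_))
  simpa using hW.1.abs_eigenvalues_le_l2_opNorm i
end

section
/- Let K and M be symmetric real n×n matrices with K positive definite and M positive semidefinite, and ω > 0. Then the block matrix B = [[K, -ωM],[ωM, K + 2ωM]] admits the factorization B = [[I, -I],[0, I]] · [[K + ωM, 0],[ωM, K + ωM]] · [[I, I],[0, I]], and hence B is invertible. -/
/-!
Multiplying out the three block factors gives the identity over any commutative ring. The outer
factors are unipotent, and the middle one is block lower triangular with diagonal blocks
`K + ωM`, which is positive definite as the sum of a positive definite and a positive
semidefinite matrix, so `B` is a product of units.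
-/

namespace Matrix

variable {n R : Type*} [Fintype n] [DecidableEq n] [CommRing R]

theorem fromBlocks_presb_eq_mul (K M : Matrix n n R) (ω : R) :
    fromBlocks K (-(ω • M)) (ω • M) (K + (2 * ω) • M) =
      fromBlocks (1 : Matrix n n R) (-1) 0 1 *
        fromBlocks (K + ω • M) 0 (ω • M) (K + ω • M) * fromBlocks 1 1 0 1 := by
  rw [fromBlocks_multiply, fromBlocks_multiply]
  congr 1 <;>
    (simp only [one_mul, mul_one, zero_mul, mul_zero, neg_mul, Algebra.mul_smul_comm]; module)

end Matrix

/-- the PRESB preconditioner factorization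
`[[K, -ωM],[ωM, K+2ωM]] = [[I,-I],[0,I]]·[[K+ωM,0],[ωM,K+ωM]]·[[I,I],[0,I]]`,
hence its invertibility. -/
theorem stmt_11 {n : ℕ} (K M : Matrix (Fin n) (Fin n) ℝ)
    (hK : K.PosDef) (hM : M.PosSemidef) (ω : ℝ) (hω : 0 < ω)
    (B : Matrix (Fin n ⊕ Fin n) (Fin n ⊕ Fin n) ℝ)
    (hB : B = Matrix.fromBlocks K (-(ω • M)) (ω • M) (K + (2 * ω) • M)) :
    B = Matrix.fromBlocks (1 : Matrix (Fin n) (Fin n) ℝ) (-1) 0 1 *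
        Matrix.fromBlocks (K + ω • M) 0 (ω • M) (K + ω • M) *
        Matrix.fromBlocks 1 1 0 1 ∧
    IsUnit B := by
  have hKM : (K + ω • M).PosDef := hK.add_posSemidef (hM.smul hω.le)
  have hfac := hB.trans (Matrix.fromBlocks_presb_eq_mul K M ω)
  refine ⟨hfac, ?_⟩
  rw [hfac]
  simp [hKM.isUnit]
end
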